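/- Let p, q ∈ (0,1), φ ∈ [0,2π), μ₁ = √(pq), μ₂ = √((1−p)(1−q)), Δp = 2p−1, Δq = 2q−1, and define a_n = |(μ₁ + e^{−iφ}μ₂)^n + (μ₁ − e^{−iφ}μ₂)^n| / √((1+Δp^n)(1+Δq^n)) and b_n = |(μ₁ + e^{−iφ}μ₂)^n − (μ₁ − e^{−iφ}μ₂)^n| / √((1−Δp^n)(1−Δq^n)). If either p ≠ q, or (p = q and φ ∉ {0, π}), then lim_{n→∞} a_n = lim_{n→∞} b_n = 0. -/

import Mathlib

/-!
Write `μ₁ = √(pq)`, `μ₂ = √((1 - p)(1 - q))` and `z = e^{-iφ}`. For `‖z‖ = 1` one has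
`‖μ₁ ± z μ₂‖² = (μ₁ + μ₂)² - 2 μ₁ μ₂ (1 ∓ Re z)`, and `μ₁ + μ₂ ≤ 1` by Cauchy–Schwarz, strictly
unless `p = q`. So if `p ≠ q`, or if `p = q` and `cos φ ≠ ±1`, both `μ₁ ± z μ₂` lie in the open
unit disc and the numerators of `a_n`, `b_n` tend to `0`, while for `n ≥ 1` the denominators are
at least `√((1 - |Δp|)(1 - |Δq|)) > 0`.
-/

open Filter

noncomputable section

/-- a_n = |(μ₁+e^{−iφ}μ₂)^n + (μ₁−e^{−iφ}μ₂)^n| / √((1+Δp^n)(1+Δq^n)), the modulus of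
the overlap ⟨0_q|0_p⟩ of the normalized even-parity components. -/
def aSeq (p q φ : ℝ) (n : ℕ) : ℝ :=
  ‖((Real.sqrt (p * q) : ℂ) +
      Complex.exp (-(Complex.I * φ)) * (Real.sqrt ((1 - p) * (1 - q)) : ℂ)) ^ n +
    ((Real.sqrt (p * q) : ℂ) -
      Complex.exp (-(Complex.I * φ)) * (Real.sqrt ((1 - p) * (1 - q)) : ℂ)) ^ n‖ /
  Real.sqrt ((1 + (2 * p - 1) ^ n) * (1 + (2 * q - 1) ^ n))

/-- b_n = |(μ₁+e^{−iφ}μ₂)^n − (μ₁−e^{−iφ}μ₂)^n| / √((1−Δp^n)(1−Δq^n)), the modulus of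
the overlap ⟨1_q|1_p⟩ of the normalized odd-parity components. -/
def bSeq (p q φ : ℝ) (n : ℕ) : ℝ :=
  ‖((Real.sqrt (p * q) : ℂ) +
      Complex.exp (-(Complex.I * φ)) * (Real.sqrt ((1 - p) * (1 - q)) : ℂ)) ^ n -
    ((Real.sqrt (p * q) : ℂ) -
      Complex.exp (-(Complex.I * φ)) * (Real.sqrt ((1 - p) * (1 - q)) : ℂ)) ^ n‖ /
  Real.sqrt ((1 - (2 * p - 1) ^ n) * (1 - (2 * q - 1) ^ n))

open Real Topology

lemma Complex.norm_sq_ofReal_add_mul_ofReal {z : ℂ} (hz : ‖z‖ = 1) (a b : ℝ) :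
    ‖(a : ℂ) + z * b‖ ^ 2 = (a + b) ^ 2 - 2 * a * b * (1 - z.re) := by
  have hz2 : z.re * z.re + z.im * z.im = 1 := by
    rw [← Complex.normSq_apply, ← Complex.sq_norm, hz, one_pow]
  rw [Complex.sq_norm, Complex.normSq_apply]
  simp only [Complex.add_re, Complex.add_im, Complex.mul_re, Complex.mul_im, Complex.ofReal_re,
    Complex.ofReal_im]
  linear_combination b ^ 2 * hz2

lemma Complex.norm_ofReal_add_mul_ofReal_lt_one {a b : ℝ} (ha : 0 ≤ a) (hb : 0 ≤ b) {z : ℂ}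
    (hz : ‖z‖ = 1) (hab : a + b ≤ 1) (h : a + b < 1 ∨ 0 < a * b ∧ z.re < 1) :
    ‖(a : ℂ) + z * b‖ < 1 := by
  have hre : z.re ≤ 1 := hz ▸ Complex.re_le_norm z
  rw [← sq_lt_one_iff₀ (norm_nonneg _), Complex.norm_sq_ofReal_add_mul_ofReal hz]
  rcases h with hab1 | ⟨hab0, hre1⟩
  · nlinarith [mul_nonneg ha hb]
  · nlinarith

/-- Lagrange's identity for the unit vectors `(√p, √(1 - p))` and `(√q, √(1 - q))`. -/
lemma sq_sqrt_add_sqrt_add_sq_sub_sqrt {p q : ℝ} (hp : p ∈ Set.Icc (0 : ℝ) 1)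
    (hq : q ∈ Set.Icc (0 : ℝ) 1) :
    (√(p * q) + √((1 - p) * (1 - q))) ^ 2 + (√(p * (1 - q)) - √((1 - p) * q)) ^ 2 = 1 := by
  obtain ⟨hp0, hp1⟩ := hp
  obtain ⟨hq0, hq1⟩ := hq
  have hcross : √(p * q) * √((1 - p) * (1 - q)) = √(p * (1 - q)) * √((1 - p) * q) := by
    rw [← Real.sqrt_mul (by positivity), ← Real.sqrt_mul (by nlinarith)]
    ring_nf
  have h1 := Real.sq_sqrt (mul_nonneg hp0 hq0)
  have h2 := Real.sq_sqrt (mul_nonneg (sub_nonneg.2 hp1) (sub_nonneg.2 hq1))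
  have h3 := Real.sq_sqrt (mul_nonneg hp0 (sub_nonneg.2 hq1))
  have h4 := Real.sq_sqrt (mul_nonneg (sub_nonneg.2 hp1) hq0)
  linear_combination h1 + h2 + h3 + h4 + 2 * hcross

lemma sqrt_mul_add_sqrt_one_sub_mul_le_one {p q : ℝ} (hp : p ∈ Set.Icc (0 : ℝ) 1)
    (hq : q ∈ Set.Icc (0 : ℝ) 1) : √(p * q) + √((1 - p) * (1 - q)) ≤ 1 := by
  have := sq_sqrt_add_sqrt_add_sq_sub_sqrt hp hq
  rw [← sq_le_one_iff₀ (by positivity)]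
  nlinarith [sq_nonneg (√(p * (1 - q)) - √((1 - p) * q))]

lemma sqrt_mul_add_sqrt_one_sub_mul_lt_one {p q : ℝ} (hp : p ∈ Set.Icc (0 : ℝ) 1)
    (hq : q ∈ Set.Icc (0 : ℝ) 1) (hpq : p ≠ q) : √(p * q) + √((1 - p) * (1 - q)) < 1 := by
  have := sq_sqrt_add_sqrt_add_sq_sub_sqrt hp hq
  have hne : √(p * (1 - q)) - √((1 - p) * q) ≠ 0 := by
    rw [sub_ne_zero, Ne, Real.sqrt_inj (mul_nonneg hp.1 (by linarith [hq.2]))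
      (mul_nonneg (by linarith [hp.2]) hq.1)]
    intro h
    exact hpq (by linarith)
  rw [← sq_lt_one_iff₀ (by positivity)]
  nlinarith [pow_pos (abs_pos.2 hne) 2, sq_abs (√(p * (1 - q)) - √((1 - p) * q))]

lemma norm_sqrt_mul_add_mul_sqrt_one_sub_mul_lt_one {p q : ℝ} (hp : p ∈ Set.Ioo (0 : ℝ) 1)
    (hq : q ∈ Set.Ioo (0 : ℝ) 1) {z : ℂ} (hz : ‖z‖ = 1) (h : p ≠ q ∨ z.re < 1) :
    ‖(√(p * q) : ℂ) + z * √((1 - p) * (1 - q))‖ < 1 := by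
  have hp' := Set.Ioo_subset_Icc_self hp
  have hq' := Set.Ioo_subset_Icc_self hq
  refine Complex.norm_ofReal_add_mul_ofReal_lt_one (Real.sqrt_nonneg _) (Real.sqrt_nonneg _) hz
    (sqrt_mul_add_sqrt_one_sub_mul_le_one hp' hq') ?_
  refine h.imp (sqrt_mul_add_sqrt_one_sub_mul_lt_one hp' hq') fun hre => ⟨?_, hre⟩
  exact mul_pos (Real.sqrt_pos.2 (mul_pos hp.1 hq.1))
    (Real.sqrt_pos.2 (mul_pos (sub_pos.2 hp.2) (sub_pos.2 hq.2)))

lemma norm_sqrt_mul_sub_mul_sqrt_one_sub_mul_lt_one {p q : ℝ} (hp : p ∈ Set.Ioo (0 : ℝ) 1)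
    (hq : q ∈ Set.Ioo (0 : ℝ) 1) {z : ℂ} (hz : ‖z‖ = 1) (h : p ≠ q ∨ -1 < z.re) :
    ‖(√(p * q) : ℂ) - z * √((1 - p) * (1 - q))‖ < 1 := by
  rw [sub_eq_add_neg, ← neg_mul]
  exact norm_sqrt_mul_add_mul_sqrt_one_sub_mul_lt_one hp hq (by rw [norm_neg, hz])
    (h.imp_right fun h => by rw [Complex.neg_re]; linarith)

lemma Real.cos_lt_one_of_ne_zero {φ : ℝ} (hφ : φ ∈ Set.Ioo (-(2 * π)) (2 * π)) (h : φ ≠ 0) :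
    cos φ < 1 :=
  (cos_le_one φ).lt_of_ne fun h1 => h ((cos_eq_one_iff_of_lt_of_lt hφ.1 hφ.2).1 h1)

lemma Real.neg_one_lt_cos_of_ne_pi {φ : ℝ} (hφ : φ ∈ Set.Ioo (-π) (3 * π)) (h : φ ≠ π) :
    -1 < cos φ := by
  refine (neg_one_le_cos φ).lt_of_ne fun h1 => h ?_
  have h2 : cos (φ - π) = 1 := by rw [cos_sub_pi, ← h1, neg_neg]
  linarith [(cos_eq_one_iff_of_lt_of_lt (x := φ - π) (by linarith [hφ.1])
    (by linarith [hφ.2])).1 h2]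

lemma abs_two_mul_sub_one_lt_one {p : ℝ} (hp : p ∈ Set.Ioo (0 : ℝ) 1) : |2 * p - 1| < 1 := by
  rw [abs_lt]
  constructor <;> linarith [hp.1, hp.2]

lemma eventually_one_sub_abs_le_one_add_pow {x : ℝ} (hx : |x| ≤ 1) :
    ∀ᶠ n : ℕ in atTop, 1 - |x| ≤ 1 + x ^ n := by
  filter_upwards [eventually_ne_atTop 0] with n hn
  linarith [neg_abs_le (x ^ n), (abs_pow x n).trans_le (pow_le_of_le_one (abs_nonneg x) hx hn)]

lemma eventually_one_sub_abs_le_one_sub_pow {x : ℝ} (hx : |x| ≤ 1) :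
    ∀ᶠ n : ℕ in atTop, 1 - |x| ≤ 1 - x ^ n := by
  filter_upwards [eventually_ne_atTop 0] with n hn
  linarith [le_abs_self (x ^ n), (abs_pow x n).trans_le (pow_le_of_le_one (abs_nonneg x) hx hn)]

lemma Filter.Tendsto.div_sqrt_mul_of_eventually_ge {α : Type*} {l : Filter α} {f u v : α → ℝ}
    (hf : Tendsto f l (𝓝 0)) {c d : ℝ} (hc : 0 < c) (hd : 0 < d) (hu : ∀ᶠ x in l, c ≤ u x)
    (hv : ∀ᶠ x in l, d ≤ v x) : Tendsto (fun x => f x / √(u x * v x)) l (𝓝 0) := by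
  have hcd : 0 < √(c * d) := Real.sqrt_pos.2 (mul_pos hc hd)
  refine squeeze_zero_norm' ?_ (by simpa using hf.abs.div_const √(c * d))
  filter_upwards [hu, hv] with x hux hvx
  rw [Real.norm_eq_abs, abs_div, abs_of_nonneg (Real.sqrt_nonneg _)]
  gcongr
  exact hc.le.trans hux

/-- If p ≠ q, or p = q and φ ∉ {0, π}, then a_n → 0 and b_n → 0. -/
theorem overlaps_tendsto_zero (p q φ : ℝ) (hp : p ∈ Set.Ioo (0 : ℝ) 1)
    (hq : q ∈ Set.Ioo (0 : ℝ) 1) (hφ : φ ∈ Set.Ico (0 : ℝ) (2 * Real.pi))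
    (h : p ≠ q ∨ (p = q ∧ φ ≠ 0 ∧ φ ≠ Real.pi)) :
    Tendsto (aSeq p q φ) atTop (nhds 0) ∧ Tendsto (bSeq p q φ) atTop (nhds 0) := by
  set z := Complex.exp (-(Complex.I * φ))
  have hz : ‖z‖ = 1 := by simpa using Complex.norm_exp_I_mul_ofReal (-φ)
  have hz_re : z.re = cos φ := by simpa [mul_comm] using Complex.exp_ofReal_mul_I_re (-φ)
  have hcos : p ≠ q ∨ cos φ < 1 ∧ -1 < cos φ := h.imp_right fun ⟨_, h0, hπ⟩ =>
    ⟨cos_lt_one_of_ne_zero ⟨by linarith [hφ.1, pi_pos], hφ.2⟩ h0,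
      neg_one_lt_cos_of_ne_pi ⟨by linarith [hφ.1, pi_pos], by linarith [hφ.2, pi_pos]⟩ hπ⟩
  have hw := norm_sqrt_mul_add_mul_sqrt_one_sub_mul_lt_one hp hq hz
    (hcos.imp_right fun hcos => hz_re ▸ hcos.1)
  have hv := norm_sqrt_mul_sub_mul_sqrt_one_sub_mul_lt_one hp hq hz
    (hcos.imp_right fun hcos => hz_re ▸ hcos.2)
  have hw_pow := tendsto_pow_atTop_nhds_zero_of_norm_lt_one hw
  have hv_pow := tendsto_pow_atTop_nhds_zero_of_norm_lt_one hv
  have hΔp := abs_two_mul_sub_one_lt_one hp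
  have hΔq := abs_two_mul_sub_one_lt_one hq
  constructor
  · exact Tendsto.div_sqrt_mul_of_eventually_ge (by simpa using (hw_pow.add hv_pow).norm)
      (sub_pos.2 hΔp) (sub_pos.2 hΔq) (eventually_one_sub_abs_le_one_add_pow hΔp.le)
      (eventually_one_sub_abs_le_one_add_pow hΔq.le)
  · exact Tendsto.div_sqrt_mul_of_eventually_ge (by simpa using (hw_pow.sub hv_pow).norm)
      (sub_pos.2 hΔp) (sub_pos.2 hΔq) (eventually_one_sub_abs_le_one_sub_pow hΔp.le)
      (eventually_one_sub_abs_le_one_sub_pow hΔq.le)
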